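/- If m ≥ 2 is even, then β(Φ(X1X2⋯Xm)) = 0 in Sym^m(H) for all X1, …, Xm ∈ H. -/
import Mathlib


noncomputable section

variable {H : Type*} [AddCommGroup H] [Module ℚ H]

/-- The pure tensor `X1 ⊗ ⋯ ⊗ Xm`, as the element `ι(X1)⋯ι(Xm)` of the
tensor algebra `T(H)`. -/
def word (l : List H) : TensorAlgebra ℚ H :=
  (l.map fun x => TensorAlgebra.ι ℚ x).prod

/-- The Dynkin map `Φ(X1 X2 ⋯ Xm) = [X1,[X2,[⋯,[X_{m−1},Xm]⋯]]]`, with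
`[a,b] := ab − ba` the commutator in `T(H)` and `Φ(X1) = X1`. -/
def dynkin : List H → TensorAlgebra ℚ H
  | [] => 0
  | [x] => TensorAlgebra.ι ℚ x
  | x :: y :: l =>
      TensorAlgebra.ι ℚ x * dynkin (y :: l) - dynkin (y :: l) * TensorAlgebra.ι ℚ x

variable {A : Type*} [CommRing A] [Algebra ℚ A]

/-- The monomial `X1 X2 ⋯ Xm` in the symmetric algebra `Sym(H)`, modelled by a
commutative `ℚ`-algebra `A` equipped with a linear map `σ : H → A`. -/
def symword (σ : H →ₗ[ℚ] A) (l : List H) : A := (l.map fun x => σ x).prod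

/-- `β = β_{Y,Z} : H^{⊗m} → Sym^m(H)` (for every `m ≥ 2` simultaneously) is the
linear map determined on pure tensors by
`β(X1⋯Xm) = −(Y·X1)·Z X2⋯Xm − (Y·Xm)·Z X1⋯X_{m−1} + (Z·X1)·Y X2⋯Xm + (Z·Xm)·Y X1⋯X_{m−1}`. -/
def IsBeta (ω : H →ₗ[ℚ] H →ₗ[ℚ] ℚ) (σ : H →ₗ[ℚ] A) (Y Z : H)
    (β : TensorAlgebra ℚ H →ₗ[ℚ] A) : Prop :=
  ∀ (x z : H) (mid : List H),
    β (word (x :: (mid ++ [z]))) =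
      -((ω Y x) • (σ Z * symword σ (mid ++ [z])))
        - (ω Y z) • (σ Z * symword σ (x :: mid))
        + (ω Z x) • (σ Y * symword σ (mid ++ [z]))
        + (ω Z z) • (σ Y * symword σ (x :: mid))

/-- `γ = γ_{Y,Z} : H^{⊗m} → Sym^m(H)` (for every `m ≥ 3` simultaneously) is the
linear map determined on pure tensors by
`γ(X1⋯Xm) = −(Y·X2)·Z X1X3⋯Xm − (Y·X_{m−1})·Z X1⋯X_{m−2}Xm + (Z·X2)·Y X1X3⋯Xm + (Z·X_{m−1})·Y X1⋯X_{m−2}Xm`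
(for `m = 3` the positions `2` and `m−1` coincide, so the corresponding terms add up). -/
def IsGamma (ω : H →ₗ[ℚ] H →ₗ[ℚ] ℚ) (σ : H →ₗ[ℚ] A) (Y Z : H)
    (γ : TensorAlgebra ℚ H →ₗ[ℚ] A) : Prop :=
  (∀ a b c : H,
    γ (word [a, b, c]) =
      -((ω Y b) • (σ Z * symword σ [a, c]))
        - (ω Y b) • (σ Z * symword σ [a, c])
        + (ω Z b) • (σ Y * symword σ [a, c])
        + (ω Z b) • (σ Y * symword σ [a, c])) ∧
  (∀ (a b : H) (mid : List H) (c d : H),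
    γ (word (a :: b :: (mid ++ [c, d]))) =
      -((ω Y b) • (σ Z * symword σ (a :: (mid ++ [c, d]))))
        - (ω Y c) • (σ Z * symword σ (a :: b :: (mid ++ [d])))
        + (ω Z b) • (σ Y * symword σ (a :: (mid ++ [c, d])))
        + (ω Z c) • (σ Y * symword σ (a :: b :: (mid ++ [d]))))

namespace Stmt5Aux

def rev : TensorAlgebra ℚ H →ₗ[ℚ] TensorAlgebra ℚ H :=
  (MulOpposite.opLinearEquiv ℚ).symm.toLinearMap ∘ₗ
    (TensorAlgebra.lift ℚ ((MulOpposite.opLinearEquiv ℚ).toLinearMap ∘ₗ TensorAlgebra.ι ℚ)).toLinearMap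

lemma rev_ι (x : H) : rev (TensorAlgebra.ι ℚ x) = TensorAlgebra.ι ℚ x := by
  simp [rev]

lemma rev_mul (a b : TensorAlgebra ℚ H) : rev (a * b) = rev b * rev a := by
  simp [rev]

lemma rev_one : rev (1 : TensorAlgebra ℚ H) = 1 := by simp [rev]

lemma word_append (l₁ l₂ : List H) : word (l₁ ++ l₂) = word l₁ * word l₂ := by
  simp [word]

lemma word_cons (x : H) (l : List H) :
    word (x :: l) = TensorAlgebra.ι ℚ x * word l := by simp [word]

lemma rev_word (l : List H) : rev (word l) = word l.reverse := by
  induction l with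
  | nil => simpa [word] using rev_one (H := H)
  | cons x t ih =>
    rw [word_cons, rev_mul, ih, rev_ι, List.reverse_cons, word_append]
    simp [word]

lemma rev_dynkin (l : List H) :
    rev (dynkin l) = ((-1 : ℚ) ^ (l.length + 1)) • dynkin l := by
  induction l with
  | nil => simp [dynkin]
  | cons x t ih =>
    cases t with
    | nil => simp [dynkin, rev_ι]
    | cons y s =>
      rw [show dynkin (x :: y :: s) =
        TensorAlgebra.ι ℚ x * dynkin (y :: s) - dynkin (y :: s) * TensorAlgebra.ι ℚ x from rfl]
      rw [map_sub, rev_mul, rev_mul, rev_ι, ih, smul_mul_assoc, mul_smul_comm]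
      rw [List.length_cons, List.length_cons, List.length_cons]
      rw [show s.length + 1 + 1 + 1 = (s.length + 1 + 1) + 1 from rfl, pow_succ]
      module

def P1 : Set (TensorAlgebra ℚ H) := {a | ∃ w : List H, w ≠ [] ∧ a = word w}

def P2 : Set (TensorAlgebra ℚ H) :=
  {a | ∃ (x z : H) (mid : List H), a = word (x :: (mid ++ [z]))}

lemma exists_concat {w : List H} (hw : w ≠ []) :
    ∃ (mid : List H) (z : H), w = mid ++ [z] := by
  rcases List.eq_nil_or_concat w with h | ⟨L, b, h⟩
  · exact absurd h hw
  · exact ⟨L, b, by simpa using h⟩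

lemma bracket_mem (x : H) {w : List H} (hw : w ≠ []) :
    TensorAlgebra.ι ℚ x * word w - word w * TensorAlgebra.ι ℚ x ∈
      Submodule.span ℚ (P2 (H := H)) := by
  obtain ⟨mid, z, hmz⟩ := exists_concat hw
  obtain ⟨h, t, rfl⟩ : ∃ h t, w = h :: t := by
    cases w with
    | nil => exact absurd rfl hw
    | cons h t => exact ⟨h, t, rfl⟩
  have h1 : TensorAlgebra.ι ℚ x * word (h :: t) = word (x :: (mid ++ [z])) := by
    rw [← hmz, ← word_cons]
  have h2 : word (h :: t) * TensorAlgebra.ι ℚ x = word (h :: (t ++ [x])) := by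
    simp [word, mul_assoc]
  rw [h1, h2]
  exact sub_mem (Submodule.subset_span ⟨x, z, mid, rfl⟩)
    (Submodule.subset_span ⟨h, x, t, rfl⟩)

lemma comm_mem (x : H) {a : TensorAlgebra ℚ H}
    (ha : a ∈ Submodule.span ℚ (P1 (H := H))) :
    TensorAlgebra.ι ℚ x * a - a * TensorAlgebra.ι ℚ x ∈
      Submodule.span ℚ (P2 (H := H)) := by
  induction ha using Submodule.span_induction with
  | mem b hb => obtain ⟨w, hw, rfl⟩ := hb; exact bracket_mem x hw
  | zero => simp
  | add a b _ _ ha hb => convert add_mem ha hb using 1; noncomm_ring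
  | smul c a _ ha =>
    convert Submodule.smul_mem _ c ha using 1
    rw [smul_sub, mul_smul_comm, smul_mul_assoc]

lemma span_P2_le : Submodule.span ℚ (P2 (H := H)) ≤ Submodule.span ℚ (P1 (H := H)) := by
  apply Submodule.span_le.mpr
  rintro a ⟨x, z, mid, rfl⟩
  exact Submodule.subset_span ⟨x :: (mid ++ [z]), by simp, rfl⟩

lemma dynkin_mem1 (l : List H) : dynkin l ∈ Submodule.span ℚ (P1 (H := H)) := by
  induction l with
  | nil => simp [dynkin]
  | cons x t ih =>
    cases t with
    | nil => exact Submodule.subset_span ⟨[x], by simp, by simp [word, dynkin]⟩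
    | cons y s =>
      rw [show dynkin (x :: y :: s) =
        TensorAlgebra.ι ℚ x * dynkin (y :: s) - dynkin (y :: s) * TensorAlgebra.ι ℚ x from rfl]
      exact span_P2_le (comm_mem x ih)

lemma symword_perm (σ : H →ₗ[ℚ] A) {l₁ l₂ : List H} (h : l₁.Perm l₂) :
    symword σ l₁ = symword σ l₂ :=
  (h.map _).prod_eq

lemma beta_rev (ω : H →ₗ[ℚ] H →ₗ[ℚ] ℚ) (σ : H →ₗ[ℚ] A) (Y Z : H)
    (β : TensorAlgebra ℚ H →ₗ[ℚ] A) (hβ : IsBeta ω σ Y Z β)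
    {a : TensorAlgebra ℚ H} (ha : a ∈ Submodule.span ℚ (P2 (H := H))) :
    β (rev a) = β a := by
  induction ha using Submodule.span_induction with
  | mem b hb =>
    obtain ⟨x, z, mid, rfl⟩ := hb
    rw [rev_word]
    have hr : (x :: (mid ++ [z])).reverse = z :: (mid.reverse ++ [x]) := by simp
    rw [hr, hβ, hβ]
    have e1 : symword σ (mid.reverse ++ [x]) = symword σ (x :: mid) :=
      symword_perm σ (List.perm_append_comm.trans (mid.reverse_perm.cons x))
    have e2 : symword σ (z :: mid.reverse) = symword σ (mid ++ [z]) :=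
      symword_perm σ (List.perm_append_comm.trans (mid.reverse_perm.append_right [z]))
    rw [e1, e2]
    ring
  | zero => simp
  | add a b _ _ ha hb => simp [map_add, ha, hb]
  | smul c a _ ha => simp [map_smul, ha]

end Stmt5Aux

/-- Lemma (Kawazumi–Kuno, Lemma on β, part (1)): if `m ≥ 2` is even, then
`β(Φ(X1 X2 ⋯ Xm)) = 0` in `Sym^m(H)` for all `X1, …, Xm ∈ H`. -/
theorem stmt5 (ω : H →ₗ[ℚ] H →ₗ[ℚ] ℚ) (hω : ∀ x, ω x x = 0)
    (σ : H →ₗ[ℚ] A) (Y Z : H)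
    (β : TensorAlgebra ℚ H →ₗ[ℚ] A) (hβ : IsBeta ω σ Y Z β)
    (l : List H) (hl : 2 ≤ l.length) (he : Even l.length) :
    β (dynkin l) = 0 := by
  open Stmt5Aux in
  obtain ⟨x, y, s, rfl⟩ : ∃ x y s, l = x :: y :: s := by
    match l with
    | [] => simp at hl
    | [x] => simp at hl
    | x :: y :: s => exact ⟨x, y, s, rfl⟩
  have hmem : dynkin (x :: y :: s) ∈ Submodule.span ℚ (Stmt5Aux.P2 (H := H)) := by
    rw [show dynkin (x :: y :: s) =
      TensorAlgebra.ι ℚ x * dynkin (y :: s) - dynkin (y :: s) * TensorAlgebra.ι ℚ x from rfl]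
    exact Stmt5Aux.comm_mem x (Stmt5Aux.dynkin_mem1 _)
  have h1 := Stmt5Aux.beta_rev ω σ Y Z β hβ hmem
  rw [Stmt5Aux.rev_dynkin, map_smul] at h1
  have hodd : Odd ((x :: y :: s).length + 1) := he.add_one
  rw [hodd.neg_one_pow, neg_smul, one_smul] at h1
  have h2 : (2 : ℚ) • β (dynkin (x :: y :: s)) = 0 := by
    rw [two_smul]
    linear_combination -h1
  calc β (dynkin (x :: y :: s))
      = (2⁻¹ : ℚ) • ((2 : ℚ) • β (dynkin (x :: y :: s))) := by rw [smul_smul]; norm_num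
    _ = 0 := by rw [h2, smul_zero]


end
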